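/- There is a sequential one-shot object with no corresponding task: consider the restricted queue O for three processes p, q, r in which, in every execution, p invokes enq(1) (returning ok), q invokes enq(2) (returning ok), and r invokes deq() (returning the first enqueued value, or ⊥ if the FIFO queue is empty), each process invoking its operation at most once, with the usual sequential FIFO-queue semantics. Then there is no task T_O such that, for every execution E, E is linearizable with respect to O if and only if E satisfies T_O. -/

import Mathlib

/-! ## One-shot executions, interval-sequential objects, interval-linearizability, tasks -/

/-- An event: an invocation of the (single) operation by a process with an input value,
or a response to a process with an output value. -/
inductive Ev (Proc In Out : Type) where
  | inv (p : Proc) (x : In)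
  | res (p : Proc) (y : Out)
deriving DecidableEq

namespace Ev

variable {Proc In Out : Type}

/-- The process issuing/receiving the event. -/
def proc : Ev Proc In Out → Proc
  | .inv p _ => p
  | .res p _ => p

/-- Is the event an invocation? -/
def isInv : Ev Proc In Out → Bool
  | .inv _ _ => true
  | _ => false

/-- Is the event a response? -/
def isRes : Ev Proc In Out → Bool
  | .res _ _ => true
  | _ => false

end Ev

variable {Proc In Out : Type} [DecidableEq Proc] [DecidableEq In] [DecidableEq Out]

/-- Projection of an execution (a finite sequence of events) onto a process. -/
def projP (E : List (Ev Proc In Out)) (p : Proc) : List (Ev Proc In Out) :=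
  E.filter (fun e => decide (e.proc = p))

/-- A well-formed one-shot execution: each process's subsequence is empty, a single
invocation, or an invocation followed by its matching response. -/
def OneShotWF (E : List (Ev Proc In Out)) : Prop :=
  ∀ p : Proc,
    projP E p = [] ∨ (∃ x, projP E p = [Ev.inv p x]) ∨
      ∃ x y, projP E p = [Ev.inv p x, Ev.res p y]

/-- `comp E`: the execution `E` with its pending invocations removed. -/
def comp (E : List (Ev Proc In Out)) : List (Ev Proc In Out) :=
  E.filter (fun e => e.isRes || E.any (fun e' => e'.isRes && decide (e'.proc = e.proc)))

/-- `Ebar` extends `E` by appending zero or more matching responses to pending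
invocations (well-formedness of `Ebar` forces the appended responses to match). -/
def Extension (E Ebar : List (Ev Proc In Out)) : Prop :=
  OneShotWF Ebar ∧ ∃ F, Ebar = E ++ F ∧ ∀ e ∈ F, e.isRes = true

/-- Real-time precedence between the (one-shot) operation calls of processes `p` and `q`
in an execution: the response of `p` occurs before the invocation of `q`. -/
def Prec (E : List (Ev Proc In Out)) (p q : Proc) : Prop :=
  ∃ (i j : ℕ) (y : Out) (x : In),
    i < j ∧ E[i]? = some (Ev.res p y) ∧ E[j]? = some (Ev.inv q x)

/-- An invoking concurrency class: a nonempty finite set of invocations,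
at most one per process. -/
def InvClass (C : Finset (Ev Proc In Out)) : Prop :=
  C.Nonempty ∧ (∀ e ∈ C, e.isInv = true) ∧
    ∀ e ∈ C, ∀ e' ∈ C, e.proc = e'.proc → e = e'

/-- A responding concurrency class: a nonempty finite set of responses,
at most one per process. -/
def ResClass (C : Finset (Ev Proc In Out)) : Prop :=
  C.Nonempty ∧ (∀ e ∈ C, e.isRes = true) ∧
    ∀ e ∈ C, ∀ e' ∈ C, e.proc = e'.proc → e = e'

/-- An interval-sequential execution `I₀,R₀,I₁,R₁,…,I_m,R_m`, represented as a flat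
list of concurrency classes: classes at even positions are invoking, classes at odd
positions are responding, and every response matches an invocation in an earlier
(or simultaneous-round) invoking class with no further invocation by the same
process in between. -/
def IsISExec (h : List (Finset (Ev Proc In Out))) : Prop :=
  h.length % 2 = 0 ∧
  (∀ k C, h[k]? = some C → if k % 2 = 0 then InvClass C else ResClass C) ∧
  (∀ i C r, h[i]? = some C → i % 2 = 1 → r ∈ C →
    ∃ j, j ≤ i ∧ j % 2 = 0 ∧
      (∃ D, h[j]? = some D ∧ ∃ e ∈ D, e.isInv = true ∧ e.proc = r.proc) ∧
      ∀ j' D', j < j' → j' ≤ i → j' % 2 = 0 → h[j']? = some D' →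
        ∀ e ∈ D', e.isInv = true → e.proc ≠ r.proc)

/-- An interval-sequential object: a Mealy automaton whose transitions, from a state
and a (nonempty) invoking concurrency class, produce a (nonempty) responding
concurrency class and a next state; the response uniquely determines the new state. -/
structure ISObject (Proc In Out : Type) where
  State : Type
  init : Set State
  δ : State → Finset (Ev Proc In Out) → Set (Finset (Ev Proc In Out) × State)
  valid : ∀ q I R q', (R, q') ∈ δ q I → InvClass I ∧ ResClass R
  det : ∀ q I R q1 q2, (R, q1) ∈ δ q I → (R, q2) ∈ δ q I → q1 = q2

/-- The interval-sequential specification of an object: all interval-sequential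
executions generated from an initial state by the transition relation. -/
def ISS (O : ISObject Proc In Out) : Set (List (Finset (Ev Proc In Out))) :=
  { h | IsISExec h ∧ ∃ q : ℕ → O.State, q 0 ∈ O.init ∧
      ∀ i I R, h[2*i]? = some I → h[2*i+1]? = some R →
        (R, q (i+1)) ∈ O.δ (q i) I }

/-- Projection of an interval-sequential execution onto a process `p`
(each class contains at most one event of `p`). -/
noncomputable def projPIS (h : List (Finset (Ev Proc In Out))) (p : Proc) : List (Ev Proc In Out) :=
  h.flatMap (fun C => (C.filter (fun e => e.proc = p)).toList)

/-- The interval-sequential execution `h` respects the real-time order of `Ecomp`: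
whenever the operation of `p` precedes that of `q`, every class containing an event
of `p` comes before every class containing an event of `q`. -/
def Respects (Ecomp : List (Ev Proc In Out)) (h : List (Finset (Ev Proc In Out))) : Prop :=
  ∀ p q, Prec Ecomp p q →
    ∀ (k l : ℕ) (C D : Finset (Ev Proc In Out)), h[k]? = some C → h[l]? = some D →
      (∃ e ∈ C, e.proc = p) → (∃ e ∈ D, e.proc = q) → k < l

/-- `E` is interval-linearizable with respect to the object `O`. -/
def IntervalLin (O : ISObject Proc In Out) (E : List (Ev Proc In Out)) : Prop :=
  ∃ Ebar h, Extension E Ebar ∧ h ∈ ISS O ∧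
    (∀ p, projP (comp Ebar) p = projPIS h p) ∧
    Respects (comp Ebar) h

/-- A task `(I, O, Δ)`: pure chromatic `(n-1)`-dimensional input and output complexes
together with a carrier map `Δ`. -/
structure DTask (Proc In Out : Type) [DecidableEq Proc] [DecidableEq In]
    [DecidableEq Out] [Fintype Proc] where
  I : Set (Finset (Proc × In))
  O : Set (Finset (Proc × Out))
  Δ : Finset (Proc × In) → Set (Finset (Proc × Out))
  I_nonempty : I.Nonempty
  I_down : ∀ σ ∈ I, ∀ σ' ⊆ σ, σ' ∈ I
  O_down : ∀ τ ∈ O, ∀ τ' ⊆ τ, τ' ∈ O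
  I_chromatic : ∀ σ ∈ I, ∀ v ∈ σ, ∀ w ∈ σ, (v : Proc × In).1 = w.1 → v = w
  O_chromatic : ∀ τ ∈ O, ∀ v ∈ τ, ∀ w ∈ τ, (v : Proc × Out).1 = w.1 → v = w
  I_pure : ∀ σ ∈ I, ∃ σ' ∈ I, σ ⊆ σ' ∧ σ'.card = Fintype.card Proc
  O_pure : ∀ τ ∈ O, ∃ τ' ∈ O, τ ⊆ τ' ∧ τ'.card = Fintype.card Proc
  Δ_sub : ∀ σ ∈ I, Δ σ ⊆ O
  Δ_nonempty : ∀ σ ∈ I, (Δ σ).Nonempty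
  Δ_down : ∀ σ ∈ I, ∀ τ ∈ Δ σ, ∀ τ' ⊆ τ, τ' ∈ Δ σ
  Δ_pure : ∀ σ ∈ I, ∀ τ ∈ Δ σ, ∃ τ' ∈ Δ σ, τ ⊆ τ' ∧ τ'.card = σ.card
  Δ_ids : ∀ σ ∈ I, ∀ τ ∈ Δ σ, τ.card = σ.card →
    τ.image Prod.fst = σ.image Prod.fst
  Δ_mono : ∀ σ ∈ I, ∀ σ' ⊆ σ, Δ σ' ⊆ Δ σ

/-- `σ_E`: the input simplex of all invocations of an execution. -/
def inputSimplex (E : List (Ev Proc In Out)) : Finset (Proc × In) :=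
  (E.filterMap (fun e => match e with | .inv p x => some (p, x) | _ => none)).toFinset

/-- `τ_E`: the output simplex of all responses of an execution. -/
def outputSimplex (E : List (Ev Proc In Out)) : Finset (Proc × Out) :=
  (E.filterMap (fun e => match e with | .res p y => some (p, y) | _ => none)).toFinset

/-- `E` satisfies the task `T`: for every prefix `E'` of `E`, `τ_{E'} ∈ Δ(σ_{E'})`. -/
def Satisfies [Fintype Proc] (T : DTask Proc In Out) (E : List (Ev Proc In Out)) : Prop :=
  ∀ k, outputSimplex (E.take k) ∈ T.Δ (inputSimplex (E.take k))

/-! ## Statement: a sequential one-shot object (a restricted queue) with no task -/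

/-- Outputs of the restricted queue: `ok` (for the enqueuers `p` and `q`),
`v1`/`v2` (the dequeued value `1` or `2`), or `empty` (`⊥`). -/
inductive QOut where
  | ok | v1 | v2 | empty
deriving DecidableEq

/-- The output of `r`'s `deq()` in the sequential execution in which the operations
are applied in the order `ops` (process `0` is `p` performing `enq(1)`, process `1`
is `q` performing `enq(2)`, process `2` is `r` performing `deq()`): the first value
enqueued before the dequeue, or `⊥` if none. -/
def rOut (ops : List (Fin 3)) : QOut :=
  match (ops.takeWhile (fun i => !decide (i = 2))).head? with
  | none => QOut.empty
  | some i => if i = 0 then QOut.v1 else QOut.v2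

/-- The output of each process in the sequential execution with order `ops`. -/
def qOutOf (ops : List (Fin 3)) (i : Fin 3) : QOut :=
  if i = 2 then rOut ops else QOut.ok

/-- The legal sequential execution of the restricted queue in which the operations of
the (distinct) processes listed in `ops` are executed sequentially in that order. -/
def qSeqExec (ops : List (Fin 3)) : List (Ev (Fin 3) Unit QOut) :=
  ops.flatMap (fun i => [Ev.inv i (), Ev.res i (qOutOf ops i)])

/-- `E` is linearizable with respect to the restricted queue: for some extension `Ē`
of `E` and some sequential order `ops` of distinct processes, the completed part of
`Ē` is, process by process, the legal sequential execution determined by `ops`, and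
`ops` respects the real-time precedence order of `comp Ē`. -/
def QLinearizable (E : List (Ev (Fin 3) Unit QOut)) : Prop :=
  ∃ (Ebar : List (Ev (Fin 3) Unit QOut)) (ops : List (Fin 3)),
    Extension E Ebar ∧ ops.Nodup ∧
    (∀ i : Fin 3, projP (comp Ebar) i = projP (qSeqExec ops) i) ∧
    (∀ i j : Fin 3, Prec (comp Ebar) i j → [i, j].Sublist ops)

/-! Satisfying a task depends only on the input and output simplices of the prefixes of an
execution, not on how the operations of different processes are ordered. In the execution
`enq2Enq1Deq1`, `q`'s `enq(2)` completes, then `p`'s `enq(1)`, then `r`'s `deq()` returns `1`;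
it is not linearizable, as `q` must be linearized before `p`. Yet each of its proper prefixes is
a prefix of a linearizable execution (in which `deq()` returns `2`), and the whole execution has
the same input and output simplices as the sequential run `p, q, r`, in which `deq()` rightly
returns `1`. So every task satisfied by all linearizable executions is satisfied by it. -/

instance : Fintype QOut :=
  ⟨{.ok, .v1, .v2, .empty}, fun x => by cases x <;> decide⟩

instance {Proc In Out : Type} [DecidableEq Proc] [DecidableEq In] [DecidableEq Out]
    [Fintype Proc] [Fintype In] [Fintype Out] (E : List (Ev Proc In Out)) :
    Decidable (OneShotWF E) := by
  unfold OneShotWF; infer_instance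

theorem prec_iff_exists_fin {Proc In Out : Type} [DecidableEq Proc]
    {E : List (Ev Proc In Out)} {p q : Proc} :
    Prec E p q ↔ ∃ i j : Fin E.length, i < j ∧
      E[i].isRes ∧ E[i].proc = p ∧ E[j].isInv ∧ E[j].proc = q := by
  constructor
  · rintro ⟨i, j, y, x, hij, hi, hj⟩
    obtain ⟨hi', hei⟩ := List.getElem?_eq_some_iff.mp hi
    obtain ⟨hj', hej⟩ := List.getElem?_eq_some_iff.mp hj
    exact ⟨⟨i, hi'⟩, ⟨j, hj'⟩, hij, by simp [hei, hej, Ev.isRes, Ev.isInv, Ev.proc]⟩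
  · rintro ⟨⟨i, hi'⟩, ⟨j, hj'⟩, hij, hi, rfl, hj, rfl⟩
    simp only [Fin.getElem_fin] at hi hj ⊢
    cases hei : E[i] with
    | inv _ _ => simp [hei, Ev.isRes] at hi
    | res p y =>
      cases hej : E[j] with
      | res _ _ => simp [hej, Ev.isInv] at hj
      | inv q x =>
        exact ⟨i, j, y, x, hij, by simp [hi', hei, Ev.proc], by simp [hj', hej, Ev.proc]⟩

instance {Proc In Out : Type} [DecidableEq Proc] (E : List (Ev Proc In Out)) (p q : Proc) :
    Decidable (Prec E p q) :=
  decidable_of_iff _ prec_iff_exists_fin.symm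

theorem OneShotWF.length_projP_le_two {Proc In Out : Type} [DecidableEq Proc]
    {E : List (Ev Proc In Out)} (hE : OneShotWF E) (p : Proc) : (projP E p).length ≤ 2 := by
  rcases hE p with h | ⟨x, h⟩ | ⟨x, y, h⟩ <;> simp [h]

theorem Extension.eq_of_length_projP_eq_two {Proc In Out : Type} [DecidableEq Proc]
    {E Ebar : List (Ev Proc In Out)}
    (hE : ∀ p, (projP E p).length = 2) (h : Extension E Ebar) : Ebar = E := by
  obtain ⟨hwf, F, rfl, -⟩ := h
  cases F with
  | nil => simp
  | cons e F =>
    have hle := hwf.length_projP_le_two e.proc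
    have he := hE e.proc
    simp only [projP, List.filter_append, List.length_append, List.filter_cons,
      decide_true, if_true, List.length_cons] at hle he
    omega

theorem Satisfies.outputSimplex_mem {Proc In Out : Type} [DecidableEq Proc] [DecidableEq In]
    [DecidableEq Out] [Fintype Proc] {T : DTask Proc In Out} {E : List (Ev Proc In Out)}
    (h : Satisfies T E) : outputSimplex E ∈ T.Δ (inputSimplex E) := by
  simpa using h E.length

theorem Satisfies.of_dropLast {Proc In Out : Type} [DecidableEq Proc] [DecidableEq In]
    [DecidableEq Out] [Fintype Proc] {T : DTask Proc In Out} {E : List (Ev Proc In Out)}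
    (h : Satisfies T E.dropLast) (hE : outputSimplex E ∈ T.Δ (inputSimplex E)) :
    Satisfies T E := by
  intro k
  rcases lt_or_ge k E.length with hk | hk
  · have : E.dropLast.take k = E.take k := by
      rw [List.dropLast_eq_take, List.take_take, min_eq_left (by omega)]
    simpa [this] using h k
  · rwa [List.take_of_length_le hk]

theorem eq_qOutOf_of_res_mem_qSeqExec {ops : List (Fin 3)} {i : Fin 3} {y : QOut}
    (h : Ev.res i y ∈ qSeqExec ops) : y = qOutOf ops i := by
  simp only [qSeqExec, List.mem_flatMap, List.mem_cons, reduceCtorEq, Ev.res.injEq,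
    List.not_mem_nil, false_or, or_false] at h
  obtain ⟨_, -, rfl, rfl⟩ := h
  rfl

theorem exists_eq_cons_of_rOut_eq_v1 {ops : List (Fin 3)} (h : rOut ops = .v1) :
    ∃ t, ops = 0 :: t := by
  cases ops with
  | nil => simp [rOut] at h
  | cons a t => fin_cases a <;> simp_all [rOut, List.takeWhile]

def enq2Enq1Deq1 : List (Ev (Fin 3) Unit QOut) :=
  [.inv 1 (), .res 1 .ok, .inv 0 (), .res 0 .ok, .inv 2 (), .res 2 .v1]

theorem qLinearizable_qSeqExec_pqr : QLinearizable (qSeqExec [0, 1, 2]) :=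
  ⟨qSeqExec [0, 1, 2], [0, 1, 2], ⟨by decide, [], by simp, by simp⟩,
    by decide, by decide, by decide⟩

theorem qLinearizable_enq2Enq1Deq1_dropLast : QLinearizable enq2Enq1Deq1.dropLast :=
  ⟨qSeqExec [1, 0, 2], [1, 0, 2], ⟨by decide, [.res 2 .v2], by decide, by decide⟩,
    by decide, by decide, by decide⟩

theorem not_qLinearizable_enq2Enq1Deq1 : ¬ QLinearizable enq2Enq1Deq1 := by
  rintro ⟨Ebar, ops, hext, hnodup, hproj, hprec⟩
  obtain rfl := hext.eq_of_length_projP_eq_two (by decide)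
  have hcomp : comp enq2Enq1Deq1 = enq2Enq1Deq1 := by decide
  rw [hcomp] at hproj hprec
  have hdeq : Ev.res 2 QOut.v1 ∈ projP (qSeqExec ops) 2 := by
    rw [← hproj 2]; decide
  obtain ⟨t, rfl⟩ := exists_eq_cons_of_rOut_eq_v1
    (eq_qOutOf_of_res_mem_qSeqExec (List.mem_of_mem_filter hdeq)).symm
  have hqp : [1, 0].Sublist (0 :: t) := hprec 1 0 (by decide)
  exact (List.nodup_cons.mp hnodup).1 ((hqp.of_cons_of_ne (by decide)).subset (by simp))

/-- **There is a sequential one-shot object with no corresponding task.** No task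
`T_O` captures linearizability with respect to the restricted queue: there is no task
such that, for every (well-formed, one-shot) execution `E`, `E` is linearizable with
respect to the restricted queue if and only if `E` satisfies `T_O`. -/
theorem no_task_for_restricted_queue :
    ¬ ∃ T : DTask (Fin 3) Unit QOut,
        ∀ E : List (Ev (Fin 3) Unit QOut), OneShotWF E →
          (QLinearizable E ↔ Satisfies T E) := by
  rintro ⟨T, hT⟩
  have hpqr : Satisfies T (qSeqExec [0, 1, 2]) := (hT _ (by decide)).mp qLinearizable_qSeqExec_pqr
  have hprefix : Satisfies T enq2Enq1Deq1.dropLast :=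
    (hT _ (by decide)).mp qLinearizable_enq2Enq1Deq1_dropLast
  have hsame_input : inputSimplex enq2Enq1Deq1 = inputSimplex (qSeqExec [0, 1, 2]) := by decide
  have hsame_output : outputSimplex enq2Enq1Deq1 = outputSimplex (qSeqExec [0, 1, 2]) := by
    decide
  have hsat : Satisfies T enq2Enq1Deq1 :=
    hprefix.of_dropLast (hsame_input ▸ hsame_output ▸ hpqr.outputSimplex_mem)
  exact not_qLinearizable_enq2Enq1Deq1 ((hT _ (by decide)).mpr hsat)
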